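/- arXiv:0712.1269 — 2 statements merged into one kernel-verified Lean document; each statement's English description precedes it below -/
import Mathlib

section
/- For every a ∈ D_S one has γ(a) > 0. -/
open scoped BigOperators

abbrev Edge (n : ℕ) := {e : Sym2 (Fin n) // ¬ e.IsDiag}

namespace TSP
variable {n : ℕ}
noncomputable section

def dot (a x : Edge n → ℝ) : ℝ := ∑ e, a e * x e
def ev (a : Edge n → ℝ) (u v : Fin n) : ℝ :=
  if h : u = v then 0 else a ⟨s(u, v), fun hd => h (Sym2.mk_isDiag_iff.mp hd)⟩
def indic (u v : Fin n) : Edge n → ℝ := fun e => if e.val = s(u, v) then 1 else 0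
def delta (u : Fin n) : Edge n → ℝ := fun e => if u ∈ e.val then 1/2 else 0
def RootedTri (u v w : Fin n) : Prop := v ≠ w ∧ u ≠ v ∧ u ≠ w
def tri (a : Edge n → ℝ) (u v w : Fin n) : ℝ := ev a v u + ev a u w - ev a v w
def IsMetric (a : Edge n → ℝ) : Prop := ∀ u v w, RootedTri u v w → 0 ≤ tri a u v w
def IsTT (a : Edge n → ℝ) : Prop :=
  IsMetric a ∧ ∀ u, ∃ v w, RootedTri u v w ∧ tri a u v w = 0
def lam (a : Edge n → ℝ) (u : Fin n) : ℝ :=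
  sInf {r | ∃ v w, RootedTri u v w ∧ r = tri a u v w}
def theta (a : Edge n → ℝ) : Edge n → ℝ := fun e => a e - ∑ u, lam a u * delta u e
def zvec (n : ℕ) : Edge n → ℝ := fun _ => 2 / ((n : ℝ) - 1)
def gamma (a : Edge n → ℝ) : ℝ := -1 + dot a (zvec n) - ∑ u, lam a u
def nextF (i : Fin n) : Fin n := ⟨(i.val + 1) % n, Nat.mod_lt _ i.pos⟩
def hamVec (σ : Equiv.Perm (Fin n)) : Edge n → ℝ :=
  fun e => if ∃ i : Fin n, e.val = s(σ i, σ (nextF i)) then 1 else 0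
def stsp (n : ℕ) : Set (Edge n → ℝ) :=
  convexHull ℝ {x | ∃ σ : Equiv.Perm (Fin n), x = hamVec σ}
def degree (x : Edge n → ℝ) (u : Fin n) : ℝ := ∑ e, if u ∈ e.val then x e else 0
lemma ev_symm (a : Edge n → ℝ) (u v : Fin n) : ev a u v = ev a v u := by
  unfold ev
  rcases eq_or_ne u v with h | h
  · subst h; simp
  · rw [dif_neg h, dif_neg (Ne.symm h)]
    congr 1
    exact Subtype.ext (Sym2.eq_swap)
def supportGraph (x : Edge n → ℝ) : SimpleGraph (Fin n) where
  Adj u v := u ≠ v ∧ 0 < ev x u v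
  symm := ⟨fun u v h => ⟨h.1.symm, by rw [ev_symm]; exact h.2⟩⟩
  loopless := ⟨fun u h => h.1 rfl⟩
def IsEulerian (x : Edge n → ℝ) : Prop :=
  (∀ e, ∃ m : ℕ, x e = m) ∧ (supportGraph x).Connected ∧
    ∀ u, ∃ m : ℕ, 0 < m ∧ degree x u = 2 * m
def gtsp (n : ℕ) : Set (Edge n → ℝ) := convexHull ℝ {x | IsEulerian x}
def IsFaceOf (Q F : Set (Edge n → ℝ)) : Prop :=
  ∃ a α, (∀ x ∈ Q, α ≤ dot a x) ∧ F = {x ∈ Q | dot a x = α}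
def IsGood (F : Set (Edge n → ℝ)) : Prop := ∀ e : Edge n, ∃ x ∈ F, 0 < x e
def adim (X : Set (Edge n → ℝ)) : ℕ := Module.finrank ℝ (affineSpan ℝ X).direction
def direc (F : Set (Edge n → ℝ)) : Submodule ℝ (Edge n → ℝ) :=
  Submodule.span ℝ {d | ∃ x ∈ F, ∃ y ∈ F, d = y - x}
def shortcut (u v w : Fin n) : Edge n → ℝ :=
  fun e => indic v w e - indic v u e - indic u w e
def gtspPolar (n : ℕ) : Set (Edge n → ℝ) := {b | ∀ x ∈ gtsp n, 1 ≤ dot b x}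

/-- The face of `S` defined by `a ∈ D_S`. -/
def faceS (a : Edge n → ℝ) : Set (Edge n → ℝ) :=
  {x ∈ stsp n | dot a x = dot a (zvec n) - 1}

/-- `D_S`: the points `a ∈ L` whose inequality `a·x ≥ a·z − 1` is valid for `S`
and defines a nonempty good face of `S`. -/
def DS (n : ℕ) : Set (Edge n → ℝ) :=
  {a | (∀ u, dot (delta u) a = 0) ∧
       (∀ x ∈ stsp n, dot a (zvec n) - 1 ≤ dot a x) ∧
       (faceS a).Nonempty ∧ IsGood (faceS a)}

/-- `D_P`: TT points of `P^△` defining nonempty good faces of `P`. -/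
def DP (n : ℕ) : Set (Edge n → ℝ) :=
  {b | b ∈ gtspPolar n ∧ IsTT b ∧
       ({x ∈ gtsp n | dot b x = 1}).Nonempty ∧ IsGood {x ∈ gtsp n | dot b x = 1}}

/-- `𝔉(a)`: faces of `P` definable by rotated versions of `a·x ≥ a·z − 1`. -/
def Frot (a : Edge n → ℝ) : Set (Set (Edge n → ℝ)) :=
  {F | ∃ ξ : Fin n → ℝ,
    (∀ x ∈ gtsp n,
      dot a (zvec n) - 1 + dot (∑ u, ξ u • delta u) (zvec n)
        ≤ dot (a + ∑ u, ξ u • delta u) x) ∧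
    F = {x ∈ gtsp n |
      dot (a + ∑ u, ξ u • delta u) x
        = dot a (zvec n) - 1 + dot (∑ u, ξ u • delta u) (zvec n)}}

/-- `E^u(a)`: the edges achieving the minimal triangle slack rooted at `u`. -/
def Eu (a : Edge n → ℝ) (u : Fin n) : Set (Edge n) :=
  {e | ∃ v w, RootedTri u v w ∧ e.val = s(v, w) ∧ tri a u v w = lam a u}

def IsFacetP (n : ℕ) (G : Set (Edge n → ℝ)) : Prop :=
  IsFaceOf (gtsp n) G ∧ adim G = n * (n - 1) / 2 - 1
def IsFacetS (n : ℕ) (F : Set (Edge n → ℝ)) : Prop :=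
  IsFaceOf (stsp n) F ∧ adim F + 1 = adim (stsp n)
def IsNRFacet (n : ℕ) (G : Set (Edge n → ℝ)) : Prop :=
  IsFacetP n G ∧ IsFacetS n (G ∩ stsp n)
def IsDegreeFacet (n : ℕ) (G : Set (Edge n → ℝ)) : Prop :=
  ∃ u, G = {x ∈ gtsp n | dot (delta u) x = 1}
def IsNonNegFacet (n : ℕ) (G : Set (Edge n → ℝ)) : Prop :=
  ∃ e : Edge n, G = {x ∈ gtsp n | x e = 0}
def IsNonNRFacet (n : ℕ) (G : Set (Edge n → ℝ)) : Prop :=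
  IsFacetP n G ∧ IsGood G ∧ ¬ IsDegreeFacet n G ∧
    adim (G ∩ stsp n) + 1 < adim (stsp n)

/-- Solution set of the relaxation `R_B` (degree inequalities). -/
def RBge {k : ℕ} (n : ℕ) (b : Fin k → Edge n → ℝ) : Set (Edge n → ℝ) :=
  {x | (∀ j, 1 ≤ dot (b j) x) ∧ (∀ v, 1 ≤ dot (delta v) x) ∧ ∀ e, 0 ≤ x e}

/-- Solution set of `R_B` with degree equations. -/
def RBeq {k : ℕ} (n : ℕ) (b : Fin k → Edge n → ℝ) : Set (Edge n → ℝ) :=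
  {x | (∀ j, 1 ≤ dot (b j) x) ∧ (∀ v, dot (delta v) x = 1) ∧ ∀ e, 0 ≤ x e}

/-- The parsimonious property of the relaxation `R_B`. -/
def Parsimonious {k : ℕ} (n : ℕ) (b : Fin k → Edge n → ℝ) : Prop :=
  ∀ c : Edge n → ℝ, IsMetric c →
    sInf (dot c '' RBge n b) = sInf (dot c '' RBeq n b)

/-- Adjacency in the ridge graph of `P`. -/
def RidgeAdj (n : ℕ) (F G : Set (Edge n → ℝ)) : Prop :=
  IsFacetP n F ∧ IsFacetP n G ∧ F ≠ G ∧ adim (F ∩ G) = n * (n - 1) / 2 - 2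

/-- `q_I = Σ_{u ∉ I} δ_u`. -/
def qI (n : ℕ) (I : Finset (Fin n)) : Edge n → ℝ := ∑ u ∈ Iᶜ, delta u

/-- The face `G_I` of `P`. -/
def GI (n : ℕ) (a : Edge n → ℝ) (I : Finset (Fin n)) : Set (Edge n → ℝ) :=
  {x ∈ gtsp n | dot (theta a + qI n I) x = gamma a + dot (qI n I) (zvec n)}

end

/-!
Subtracting the rotation `∑ u, λ_u(a) δ_u` from `a` gives `θ(a)`, which is nonnegative: the two
triangle slacks `t_{v,uw}(a)` and `t_{w,uv}(a)` at the ends of an edge `vw` sum to `2 a_vw`, so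
`λ_v(a) + λ_w(a) ≤ 2 a_vw`. Every point `x` of `S` satisfies `δ_u·x = 1` for all `u`, hence
`θ(a)·x = a·x − ∑ λ_u(a) = γ(a)` on the face `F_a`, and `γ(a) ≥ 0`. If `γ(a) = 0`, then `θ(a)`
vanishes on the support of every point of the good face, i.e. `θ(a) = 0`; but `δ_u·z = 1` gives
`θ(a)·z = γ(a) + 1`.
-/

open Matrix

lemma dot_eq_dotProduct (a x : Edge n → ℝ) : dot a x = a ⬝ᵥ x := rfl

lemma ev_of_ne (a : Edge n → ℝ) {v w : Fin n} (h : v ≠ w) :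
    ev a v w = a ⟨s(v, w), Sym2.mk_isDiag_iff.not.mpr h⟩ :=
  dif_neg h

lemma sum_ite_mem_sym2 {M : Type*} [AddCommMonoid M] {v w : Fin n} (h : v ≠ w) (f : Fin n → M) :
    ∑ u, (if u ∈ s(v, w) then f u else 0) = f v + f w := by
  classical
  simp_rw [← Sym2.mem_toFinset, Sym2.toFinset_mk_eq, Finset.sum_ite_mem, Finset.univ_inter,
    Finset.sum_pair h]

theorem eq_zero_of_nonneg_of_dotProduct_eq_zero {ι R : Type*} [Fintype ι] [Semiring R]
    [PartialOrder R] [IsOrderedRing R] [NoZeroDivisors R] {c : ι → R} (hc : 0 ≤ c)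
    (h : ∀ i, ∃ x : ι → R, 0 ≤ x ∧ 0 < x i ∧ c ⬝ᵥ x = 0) : c = 0 := by
  funext i
  obtain ⟨x, hx, hxi, hcx⟩ := h i
  have hterm := (Finset.sum_eq_zero_iff_of_nonneg fun j _ => mul_nonneg (hc j) (hx j)).1 hcx i
    (Finset.mem_univ i)
  exact (mul_eq_zero.1 hterm).resolve_right hxi.ne'

lemma dot_delta (u : Fin n) (x : Edge n → ℝ) : dot (delta u) x = degree x u / 2 := by
  simp only [dot, delta, degree, ite_mul, zero_mul, Finset.sum_div]
  refine Finset.sum_congr rfl fun e _ => ?_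
  split_ifs <;> ring

lemma degree_eq_sum_ev (x : Edge n → ℝ) (u : Fin n) : degree x u = ∑ v, ev x u v := by
  classical
  rw [degree, ← Finset.sum_filter, ← Finset.sum_erase _ (by simp [ev] : ev x u u = 0)]
  refine Finset.sum_bij' (fun e he => Sym2.Mem.other (Finset.mem_filter.1 he).2)
    (fun v hv => ⟨s(u, v), Sym2.mk_isDiag_iff.not.mpr (Finset.ne_of_mem_erase hv).symm⟩)
    (fun e he => Finset.mem_erase.2 ⟨Sym2.other_ne e.2 _, Finset.mem_univ _⟩)
    (fun v _ => Finset.mem_filter.2 ⟨Finset.mem_univ _, Sym2.mem_mk_left u v⟩)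
    (fun e _ => Subtype.ext (Sym2.other_spec _))
    (fun v _ => Sym2.congr_right.1 (Sym2.other_spec _)) fun e he => ?_
  have hu := (Finset.mem_filter.1 he).2
  rw [ev_of_ne _ (Sym2.other_ne e.2 hu).symm]
  exact congrArg x (Subtype.ext (Sym2.other_spec hu).symm)

lemma dot_delta_zvec (hn : 2 ≤ n) (u : Fin n) : dot (delta u) (zvec n) = 1 := by
  have hn' : (2 : ℝ) ≤ n := by exact_mod_cast hn
  have hev : ∀ v, ev (zvec n) u v = if u = v then 0 else 2 / ((n : ℝ) - 1) := fun v => by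
    simp [ev, zvec]
  simp only [dot_delta, degree_eq_sum_ev, hev, Finset.sum_ite, Finset.sum_const_zero,
    Finset.sum_const, Finset.filter_ne, Finset.mem_univ, Finset.card_erase_of_mem,
    Finset.card_univ, Fintype.card_fin, zero_add, nsmul_eq_mul]
  have hne : (n : ℝ) - 1 ≠ 0 := by linarith
  rw [Nat.cast_sub (by omega), Nat.cast_one]
  field_simp

lemma nextF_eq_add_one [NeZero n] (i : Fin n) : nextF i = i + 1 := by
  ext
  simp [nextF, Fin.val_add]

open Fin.CommRing in
lemma Fin.pairwise_ne_add_one_sub_one (hn : 3 ≤ n) [NeZero n] (j : Fin n) :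
    j + 1 ≠ j ∧ j - 1 ≠ j ∧ j + 1 ≠ j - 1 := by
  have h1 : (1 : Fin n) ≠ 0 := by
    simp [Fin.ext_iff, Nat.mod_eq_of_lt (show 1 < n by omega)]
  have h2 : (2 : Fin n) ≠ 0 := by
    simp [Fin.ext_iff, Nat.mod_eq_of_lt (show 2 < n by omega)]
  refine ⟨fun h => h1 ?_, fun h => h1 ?_, fun h => h2 ?_⟩
  · linear_combination h
  · linear_combination -h
  · linear_combination h

lemma exists_cycle_edge_iff [NeZero n] (σ : Equiv.Perm (Fin n)) (j : Fin n) (v : Fin n) :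
    (∃ i, s(σ j, v) = s(σ i, σ (nextF i))) ↔ v = σ (j + 1) ∨ v = σ (j - 1) := by
  simp only [nextF_eq_add_one, Sym2.eq_iff, σ.injective.eq_iff]
  constructor
  · rintro ⟨i, ⟨rfl, rfl⟩ | ⟨rfl, rfl⟩⟩
    · exact Or.inl rfl
    · exact Or.inr (by rw [add_sub_cancel_right])
  · rintro (rfl | rfl)
    · exact ⟨j, Or.inl ⟨rfl, rfl⟩⟩
    · exact ⟨j - 1, Or.inr ⟨(sub_add_cancel j 1).symm, rfl⟩⟩

lemma dot_delta_hamVec (hn : 3 ≤ n) (σ : Equiv.Perm (Fin n)) (u : Fin n) :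
    dot (delta u) (hamVec σ) = 1 := by
  have : NeZero n := ⟨by omega⟩
  classical
  obtain ⟨j, rfl⟩ := σ.surjective u
  obtain ⟨hj₁, hj₂, hj⟩ := Fin.pairwise_ne_add_one_sub_one hn j
  have hev : ∀ v, ev (hamVec σ) (σ j) v =
      if v ∈ ({σ (j + 1), σ (j - 1)} : Finset (Fin n)) then 1 else 0 := by
    intro v
    by_cases hv : σ j = v
    · subst hv
      simp [ev, σ.injective.eq_iff, hj₁.symm, hj₂.symm]
    · rw [ev_of_ne _ hv]
      simp only [hamVec, Finset.mem_insert, Finset.mem_singleton, ← exists_cycle_edge_iff]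
  rw [dot_delta, degree_eq_sum_ev, Finset.sum_congr rfl fun v _ => hev v, Finset.sum_ite_mem,
    Finset.univ_inter, Finset.sum_const, Finset.card_pair (σ.injective.ne hj)]
  norm_num

lemma nonneg_of_mem_stsp {x : Edge n → ℝ} (hx : x ∈ stsp n) : 0 ≤ x := by
  refine convexHull_min ?_ (convex_Ici 0) hx
  rintro _ ⟨σ, rfl⟩ e
  unfold hamVec
  split_ifs <;> norm_num

lemma dot_delta_of_mem_stsp (hn : 3 ≤ n) {x : Edge n → ℝ} (hx : x ∈ stsp n) (u : Fin n) :
    dot (delta u) x = 1 := by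
  have hlin : IsLinearMap ℝ (dot (delta u)) :=
    ⟨fun x y => dotProduct_add _ x y, fun c x => dotProduct_smul c _ x⟩
  refine convexHull_min ?_ (convex_hyperplane hlin 1) hx
  rintro _ ⟨σ, rfl⟩
  exact dot_delta_hamVec hn σ u

lemma lam_le_tri (a : Edge n → ℝ) {u v w : Fin n} (h : RootedTri u v w) :
    lam a u ≤ tri a u v w := by
  have hfin : {r | ∃ v w, RootedTri u v w ∧ r = tri a u v w}.Finite :=
    (Set.finite_range fun p : Fin n × Fin n => tri a u p.1 p.2).subset
      (by rintro r ⟨v, w, -, rfl⟩; exact ⟨(v, w), rfl⟩)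
  exact csInf_le hfin.bddBelow ⟨v, w, h, rfl⟩

lemma theta_eq (a : Edge n → ℝ) : theta a = a - ∑ u, lam a u • delta u := by
  ext e
  simp [theta, Finset.sum_apply]

lemma dot_theta (a x : Edge n → ℝ) :
    dot (theta a) x = dot a x - ∑ u, lam a u * dot (delta u) x := by
  simp only [dot_eq_dotProduct, theta_eq, sub_dotProduct, sum_dotProduct, smul_dotProduct,
    smul_eq_mul]

lemma ev_theta (a : Edge n → ℝ) {v w : Fin n} (h : v ≠ w) :
    ev (theta a) v w = ev a v w - (lam a v + lam a w) / 2 := by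
  rw [ev_of_ne _ h, ev_of_ne _ h, theta]
  simp only [delta, mul_ite, mul_zero]
  rw [sum_ite_mem_sym2 h]
  ring

lemma theta_nonneg (hn : 3 ≤ n) (a : Edge n → ℝ) : 0 ≤ theta a := by
  rintro ⟨e, he⟩
  induction e using Sym2.ind with
  | h v w =>
    have hvw : v ≠ w := fun h => he (Sym2.mk_isDiag_iff.mpr h)
    obtain ⟨u, huv, huw⟩ := Fin.exists_ne_and_ne_of_two_lt v w (by omega)
    have hv := lam_le_tri a (show RootedTri v u w from ⟨huw, huv.symm, hvw⟩)
    have hw := lam_le_tri a (show RootedTri w u v from ⟨huv, huw.symm, hvw.symm⟩)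
    have hθ := ev_theta a hvw
    rw [ev_of_ne _ hvw] at hθ
    rw [tri, ev_symm a w v] at hw
    rw [tri] at hv
    simp only [Pi.zero_apply, hθ]
    linarith

lemma dot_theta_of_mem_faceS (hn : 3 ≤ n) {a x : Edge n → ℝ} (hx : x ∈ faceS a) :
    dot (theta a) x = gamma a := by
  simp only [dot_theta, hx.2, dot_delta_of_mem_stsp hn hx.1, mul_one, gamma]
  ring

lemma dot_theta_zvec (hn : 2 ≤ n) (a : Edge n → ℝ) : dot (theta a) (zvec n) = gamma a + 1 := by
  simp only [dot_theta, dot_delta_zvec hn, mul_one, gamma]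
  ring

/-- `γ(a) > 0` for all `a ∈ D_S`. -/
theorem stmt13 (n : ℕ) (hn : 5 ≤ n) (a : Edge n → ℝ) (ha : a ∈ DS n) :
    0 < gamma a := by
  obtain ⟨-, -, ⟨x₀, hx₀⟩, hgood⟩ := ha
  have hθ : 0 ≤ theta a := theta_nonneg (by omega) a
  have hface : ∀ x ∈ faceS a, dot (theta a) x = gamma a :=
    fun x hx => dot_theta_of_mem_faceS (by omega) hx
  have hγ : 0 ≤ gamma a :=
    hface x₀ hx₀ ▸ dotProduct_nonneg_of_nonneg hθ (nonneg_of_mem_stsp hx₀.1)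
  refine hγ.lt_of_ne fun hγ₀ => ?_
  have hθ₀ : theta a = 0 := eq_zero_of_nonneg_of_dotProduct_eq_zero hθ fun e => by
    obtain ⟨x, hx, hxe⟩ := hgood e
    exact ⟨x, nonneg_of_mem_stsp hx.1, hxe, (hface x hx).trans hγ₀.symm⟩
  have hz := dot_theta_zvec (by omega) a
  rw [hθ₀, ← hγ₀, dot_eq_dotProduct, zero_dotProduct] at hz
  norm_num at hz

end TSP
end

section
/- Let b_1,…,b_k ∈ ℝ^E be such that each inequality b_j·x ≥ 1 is valid for P and defines an NR-facet of P, and suppose the relaxation R_B determined by b_1,…,b_k has the parsimonious property. If c·x ≥ γ is valid for P and defines a non-NR facet of P, then it is impossible to write c = Σ_{j=1}^k t_j b_j − Σ_{v∈V} μ_v δ_v and γ = Σ_{j=1}^k t_j − Σ_{v∈V} μ_v with t_1,…,t_k ≥ 0 and μ ∈ ℝ^V. -/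
open scoped BigOperators

namespace TSP
variable {n : ℕ}
/-!
Let `G` be the facet cut out by `c·x ≥ γ`. Because `G` is good, `c` is metric (an Eulerian vertex
of `G` using the edge `vw` can be rerouted through `u` without leaving `P`), so parsimony applies
to `c`. If `c = Σ tⱼ bⱼ − Σ μᵥ δᵥ` with `t ≥ 0`, then `c·x ≥ γ` holds on `R_B` with degree
equations, hence on `R_B` itself. But `G` is good and is neither a degree facet nor one of the
NR-facets `bⱼ·x = 1`, so some point of `G` satisfies every inequality of `R_B` strictly; moving it
slightly in the direction `−c` (nonzero, as `G ≠ P ⊇ S`) stays in `R_B` and makes `c·x < γ`.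
-/

open Matrix

lemma dot_add (a x y : Edge n → ℝ) : dot a (x + y) = dot a x + dot a y := dotProduct_add a x y

lemma dot_sub (a x y : Edge n → ℝ) : dot a (x - y) = dot a x - dot a y := dotProduct_sub a x y

lemma dot_smul (a x : Edge n → ℝ) (r : ℝ) : dot a (r • x) = r * dot a x := dotProduct_smul r a x

def mkEdge {u v : Fin n} (h : u ≠ v) : Edge n := ⟨s(u, v), fun hd => h (Sym2.mk_isDiag_iff.mp hd)⟩

lemma ev_eq_apply_mkEdge (a : Edge n → ℝ) {u v : Fin n} (h : u ≠ v) : ev a u v = a (mkEdge h) :=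
  dif_neg h

lemma indic_eq_single {u v : Fin n} (h : u ≠ v) : indic u v = Pi.single (mkEdge h) 1 := by
  funext e
  simp [indic, Pi.single_apply, mkEdge, Subtype.ext_iff]

lemma dot_indic (a : Edge n → ℝ) {u v : Fin n} (h : u ≠ v) : dot a (indic u v) = ev a u v := by
  rw [indic_eq_single h, dot_eq_dotProduct, dotProduct_single, mul_one, ev_eq_apply_mkEdge]

lemma degree_eq_two_mul_dot_delta (x : Edge n → ℝ) (u : Fin n) :
    degree x u = 2 * dot (delta u) x := by
  simp only [degree, dot, delta, Finset.mul_sum]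
  refine Finset.sum_congr rfl fun e _ => ?_
  split_ifs <;> ring

lemma le_dot_of_mem_convexHull {s : Set (Edge n → ℝ)} {a : Edge n → ℝ} {α : ℝ}
    (h : ∀ z ∈ s, α ≤ dot a z) {x : Edge n → ℝ} (hx : x ∈ convexHull ℝ s) : α ≤ dot a x :=
  convexHull_min h (convex_halfSpace_ge (dotProductBilin ℝ ℝ a).isLinear α) hx

lemma IsEulerian.nonneg {z : Edge n → ℝ} (hz : IsEulerian z) (e : Edge n) : 0 ≤ z e := by
  obtain ⟨m, hm⟩ := hz.1 e
  exact hm ▸ m.cast_nonneg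

lemma IsEulerian.one_le_of_pos {z : Edge n → ℝ} (hz : IsEulerian z) {e : Edge n} (he : 0 < z e) :
    1 ≤ z e := by
  obtain ⟨m, hm⟩ := hz.1 e
  rw [hm] at he ⊢
  exact Nat.one_le_cast.mpr (Nat.cast_pos.mp he)

lemma IsEulerian.one_le_dot_delta {z : Edge n → ℝ} (hz : IsEulerian z) (u : Fin n) :
    1 ≤ dot (delta u) z := by
  obtain ⟨m, hm, hdeg⟩ := hz.2.2 u
  rw [degree_eq_two_mul_dot_delta] at hdeg
  have : (1 : ℝ) ≤ m := by exact_mod_cast hm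
  linarith

lemma gtsp_nonneg {x : Edge n → ℝ} (hx : x ∈ gtsp n) (e : Edge n) : 0 ≤ x e := by
  simpa [dot_eq_dotProduct, dotProduct_single] using
    le_dot_of_mem_convexHull (a := Pi.single e 1) (fun z hz => by
      simpa [dot_eq_dotProduct, dotProduct_single] using IsEulerian.nonneg hz e) hx

lemma one_le_dot_delta_of_mem_gtsp {x : Edge n → ℝ} (hx : x ∈ gtsp n) (u : Fin n) :
    1 ≤ dot (delta u) x :=
  le_dot_of_mem_convexHull (fun _ hz => IsEulerian.one_le_dot_delta hz u) hx

lemma exists_mem_dot_eq_pos_of_mem_convexHull {s : Set (Edge n → ℝ)} {c : Edge n → ℝ} {γ : ℝ}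
    (hs : ∀ z ∈ s, γ ≤ dot c z) {x : Edge n → ℝ} (hx : x ∈ convexHull ℝ s) (hxc : dot c x = γ)
    {e : Edge n} (hxe : 0 < x e) : ∃ z ∈ s, dot c z = γ ∧ 0 < z e := by
  obtain ⟨ι, _, w, z, hw0, hw1, hzs, rfl⟩ := mem_convexHull_iff_exists_fintype.mp hx
  have htight : ∀ i, w i * (dot c (z i) - γ) = 0 := by
    have hsum : ∑ i, w i * (dot c (z i) - γ) = 0 := by
      simp only [mul_sub, Finset.sum_sub_distrib, ← Finset.sum_mul, hw1, one_mul, ← hxc,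
        dot_eq_dotProduct, dotProduct_sum, dotProduct_smul, smul_eq_mul]
      ring
    exact fun i => (Finset.sum_eq_zero_iff_of_nonneg fun i _ =>
      mul_nonneg (hw0 i) (sub_nonneg.mpr (hs _ (hzs i)))).mp hsum i (Finset.mem_univ i)
  have hxe' : ∑ _i : ι, (0 : ℝ) < ∑ i, w i * z i e := by
    simpa [Finset.sum_apply] using hxe
  obtain ⟨i, -, hi⟩ := Finset.exists_lt_of_sum_lt hxe'
  obtain ⟨hwi, hzi⟩ := (pos_and_pos_or_neg_and_neg_of_mul_pos hi).resolve_right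
    fun h => (hw0 i).not_gt h.1
  refine ⟨z i, hzs i, ?_, hzi⟩
  linarith [(mul_eq_zero.mp (htight i)).resolve_left hwi.ne']

lemma _root_.SimpleGraph.Reachable.of_adj_reachable {V : Type*} {G H : SimpleGraph V}
    (h : ∀ ⦃p q⦄, G.Adj p q → H.Reachable p q) {p q : V} (hpq : G.Reachable p q) :
    H.Reachable p q := by
  obtain ⟨walk⟩ := hpq
  induction walk with
  | nil => rfl
  | cons ha _ ih => exact (h ha).trans ih

lemma _root_.SimpleGraph.Connected.of_adj_reachable {V : Type*} {G H : SimpleGraph V}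
    (hG : G.Connected) (h : ∀ ⦃p q⦄, G.Adj p q → H.Reachable p q) : H.Connected :=
  haveI := hG.nonempty
  ⟨fun p q => (hG p q).of_adj_reachable h⟩

lemma shortcut_eq (u v w : Fin n) : shortcut u v w = indic v w - indic v u - indic u w := rfl

lemma sub_shortcut_apply (z : Edge n → ℝ) (u v w : Fin n) (e : Edge n) :
    (z - shortcut u v w) e = z e + indic v u e + indic u w e - indic v w e := by
  simp only [Pi.sub_apply, shortcut]
  ring

lemma dot_shortcut (c : Edge n → ℝ) {u v w : Fin n} (h : RootedTri u v w) :
    dot c (shortcut u v w) = -tri c u v w := by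
  obtain ⟨hvw, huv, huw⟩ := h
  rw [shortcut_eq, dot_sub, dot_sub, dot_indic c hvw, dot_indic c huv.symm, dot_indic c huw, tri]
  ring

lemma dot_delta_shortcut (r : Fin n) {u v w : Fin n} (h : RootedTri u v w) :
    dot (delta r) (shortcut u v w) = if r = u then -1 else 0 := by
  obtain ⟨hvw, huv, huw⟩ := h
  rw [shortcut_eq, dot_sub, dot_sub, dot_indic _ hvw, dot_indic _ huv.symm, dot_indic _ huw, ev_eq_apply_mkEdge _ hvw, ev_eq_apply_mkEdge _ huv.symm,
    ev_eq_apply_mkEdge _ huw]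
  simp only [delta, mkEdge, Sym2.mem_iff]
  rcases eq_or_ne r u with rfl | hru
  · simp [huv, huw]
    norm_num
  · by_cases hrv : r = v <;> by_cases hrw : r = w <;> simp_all

lemma indic_nonneg (u v : Fin n) (e : Edge n) : 0 ≤ indic u v e := by
  unfold indic
  split_ifs <;> norm_num

lemma indic_mkEdge {u v : Fin n} (h : u ≠ v) : indic u v (mkEdge h) = 1 := if_pos rfl

lemma exists_natCast_sub_shortcut {z : Edge n → ℝ} (hz : ∀ e, ∃ m : ℕ, z e = m) {u v w : Fin n}
    (h : RootedTri u v w) (hvw : 1 ≤ z (mkEdge h.1)) (e : Edge n) :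
    ∃ m : ℕ, (z - shortcut u v w) e = m := by
  obtain ⟨hvw', huv, huw⟩ := h
  obtain ⟨m, hm⟩ := hz e
  rw [sub_shortcut_apply, hm]
  by_cases he : e.val = s(v, w)
  · obtain rfl : e = mkEdge hvw' := Subtype.ext he
    have hm1 : 1 ≤ m := Nat.one_le_cast.mp (hm ▸ hvw)
    refine ⟨m - 1, ?_⟩
    simp [indic, he, huv.symm, huw.symm, hvw', Nat.cast_sub hm1]
  · refine ⟨m + (if e.val = s(v, u) then 1 else 0) + (if e.val = s(u, w) then 1 else 0), ?_⟩
    simp only [indic, if_neg he]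
    push_cast
    ring

lemma connected_supportGraph_sub_shortcut {z : Edge n → ℝ} (hz : (supportGraph z).Connected)
    (hnn : ∀ e, 0 ≤ z e) {u v w : Fin n} (h : RootedTri u v w) :
    (supportGraph (z - shortcut u v w)).Connected := by
  obtain ⟨hvw, huv, huw⟩ := h
  have hadj : ∀ {p q} (hpq : p ≠ q), s(p, q) ≠ s(v, w) →
      0 < z (mkEdge hpq) + indic v u (mkEdge hpq) + indic u w (mkEdge hpq) →
      (supportGraph (z - shortcut u v w)).Adj p q := fun hpq hne hpos => by
    refine ⟨hpq, ?_⟩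
    rw [ev_eq_apply_mkEdge _ hpq, sub_shortcut_apply]
    simpa [indic, mkEdge, hne] using hpos
  have hvu : (supportGraph (z - shortcut u v w)).Adj v u := hadj huv.symm (by simp [huw, hvw])
    (by linarith [hnn (mkEdge huv.symm), indic_mkEdge huv.symm, indic_nonneg u w (mkEdge huv.symm)])
  have huw : (supportGraph (z - shortcut u v w)).Adj u w := hadj huw (by simp [huv, huw])
    (by linarith [hnn (mkEdge huw), indic_mkEdge huw, indic_nonneg v u (mkEdge huw)])
  refine hz.of_adj_reachable fun p q ⟨hpq, hzpq⟩ => ?_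
  rw [ev_eq_apply_mkEdge _ hpq] at hzpq
  by_cases hc : s(p, q) = s(v, w)
  · rcases Sym2.eq_iff.mp hc with ⟨rfl, rfl⟩ | ⟨rfl, rfl⟩
    · exact hvu.reachable.trans huw.reachable
    · exact (hvu.reachable.trans huw.reachable).symm
  · refine (hadj hpq hc ?_).reachable
    linarith [indic_nonneg v u (mkEdge hpq), indic_nonneg u w (mkEdge hpq)]

lemma degree_sub_shortcut (z : Edge n → ℝ) {u v w : Fin n} (h : RootedTri u v w) (r : Fin n) :
    degree (z - shortcut u v w) r = degree z r + if r = u then 2 else 0 := by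
  rw [degree_eq_two_mul_dot_delta, degree_eq_two_mul_dot_delta, dot_sub, dot_delta_shortcut r h]
  split_ifs <;> ring

lemma IsEulerian.sub_shortcut {z : Edge n → ℝ} (hz : IsEulerian z) {u v w : Fin n}
    (h : RootedTri u v w) (hvw : 0 < z (mkEdge h.1)) : IsEulerian (z - shortcut u v w) := by
  refine ⟨exists_natCast_sub_shortcut hz.1 h (hz.one_le_of_pos hvw),
    connected_supportGraph_sub_shortcut hz.2.1 hz.nonneg h, fun r => ?_⟩
  obtain ⟨m, hm, hdeg⟩ := hz.2.2 r
  rw [degree_sub_shortcut z h, hdeg]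
  by_cases hru : r = u
  · exact ⟨m + 1, m.succ_pos, by simp [hru]; ring⟩
  · exact ⟨m, hm, by simp [hru]⟩

lemma isMetric_of_isGood {c : Edge n → ℝ} {γ : ℝ} (hval : ∀ x ∈ gtsp n, γ ≤ dot c x)
    (hgood : IsGood {x ∈ gtsp n | dot c x = γ}) : IsMetric c := by
  intro u v w h
  obtain ⟨x, ⟨hxP, hxc⟩, hxe⟩ := hgood (mkEdge h.1)
  obtain ⟨z, hz, hzc, hze⟩ := exists_mem_dot_eq_pos_of_mem_convexHull
    (fun z hz => hval z (subset_convexHull ℝ _ hz)) hxP hxc hxe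
  have := hval _ (subset_convexHull ℝ _ (hz.sub_shortcut h hze))
  rw [dot_sub, dot_shortcut c h, hzc] at this
  linarith

lemma IsMetric.nonneg (hn : 3 ≤ n) {c : Edge n → ℝ} (hc : IsMetric c) (e : Edge n) : 0 ≤ c e := by
  obtain ⟨e, he⟩ := e
  induction e using Sym2.ind with
  | _ v w =>
    have hvw : v ≠ w := fun h => he (Sym2.mk_isDiag_iff.mpr h)
    obtain ⟨u, huv, huw⟩ := ENat.exists_ne_ne_of_three_le (by simpa using hn) v w
    have h1 := hc v w u ⟨huw.symm, hvw, huv.symm⟩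
    have h2 := hc w u v ⟨huv, huw.symm, hvw.symm⟩
    have hc : c ⟨s(v, w), he⟩ = ev c w v := by rw [ev_symm]; exact (ev_eq_apply_mkEdge c hvw).symm
    simp only [tri] at h1 h2
    linarith [ev_symm c u v, ev_symm c u w]

lemma hamVec_adj (hn : 3 ≤ n) (σ : Equiv.Perm (Fin n)) (i : Fin n) :
    (supportGraph (hamVec σ)).Adj (σ i) (σ (nextF i)) := by
  have : NeZero n := ⟨by omega⟩
  have hne : σ i ≠ σ (nextF i) :=
    σ.injective.ne (by simp [nextF_eq_add_one, Fin.ext_iff]; omega)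
  refine ⟨hne, ?_⟩
  rw [ev_eq_apply_mkEdge _ hne, hamVec, if_pos ⟨i, rfl⟩]
  exact one_pos

lemma degree_hamVec (hn : 3 ≤ n) (σ : Equiv.Perm (Fin n)) (p : Fin n) :
    degree (hamVec σ) p = 2 := by
  have : NeZero n := ⟨by omega⟩
  have h2 : (1 + 1 : Fin n) ≠ 0 := by
    simp [Fin.ext_iff, Fin.val_add, Nat.mod_eq_of_lt (show 1 < n by omega),
      Nat.mod_eq_of_lt (show 2 < n by omega)]
  obtain ⟨j, rfl⟩ := σ.surjective p
  have hprev : σ (j - 1) ≠ σ j := by simpa [nextF_eq_add_one] using (hamVec_adj hn σ (j - 1)).ne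
  have hnext : σ j ≠ σ (j + 1) := by simpa [nextF_eq_add_one] using (hamVec_adj hn σ j).ne
  have hmem : ∀ e : Edge n, (σ j ∈ e.val ∧ ∃ i, e.val = s(σ i, σ (nextF i))) ↔
      e = mkEdge hprev ∨ e = mkEdge hnext := by
    intro e
    simp only [nextF_eq_add_one, Subtype.ext_iff, mkEdge]
    constructor
    · rintro ⟨hj, i, hi⟩
      rw [hi, Sym2.mem_iff, σ.injective.eq_iff, σ.injective.eq_iff] at hj
      rcases hj with rfl | rfl
      · exact Or.inr hi
      · exact Or.inl (by simpa using hi)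
    · rintro (h | h) <;> rw [h]
      · exact ⟨by simp, j - 1, by simp⟩
      · exact ⟨by simp, j, rfl⟩
  have hne : mkEdge hprev ≠ mkEdge hnext := by
    simp only [mkEdge, ne_eq, Subtype.mk.injEq, Sym2.eq_iff, σ.injective.eq_iff]
    rintro (⟨h, -⟩ | ⟨h, -⟩)
    · exact hprev (congrArg σ h)
    · rw [sub_eq_iff_eq_add, add_assoc, left_eq_add] at h
      exact h2 h
  calc degree (hamVec σ) (σ j)
      = ∑ e : Edge n, if e = mkEdge hprev ∨ e = mkEdge hnext then 1 else 0 := by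
        refine Finset.sum_congr rfl fun e _ => ?_
        simp only [hamVec, ← ite_and, hmem]
    _ = 2 := by
        rw [Finset.sum_boole, Finset.filter_or, Finset.filter_eq', Finset.filter_eq',
          if_pos (Finset.mem_univ _), if_pos (Finset.mem_univ _), ← Finset.insert_eq,
          Finset.card_pair hne]
        norm_num

lemma hamVec_connected (hn : 3 ≤ n) (σ : Equiv.Perm (Fin n)) :
    (supportGraph (hamVec σ)).Connected := by
  obtain ⟨m, rfl⟩ : ∃ m, n = m + 1 := ⟨n - 1, by omega⟩
  refine SimpleGraph.cycleGraph_connected.map ⟨σ, fun {u v} huv => ?_⟩ σ.surjective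
  have hone : ((1 : Fin (m + 1)) : ℕ) = 1 := by
    rw [Fin.val_one', Nat.mod_eq_of_lt (by omega)]
  rcases SimpleGraph.cycleGraph_adj'.mp huv with h | h
  · obtain rfl : u = v + 1 := sub_eq_iff_eq_add'.mp (Fin.ext (h.trans hone.symm))
    simpa [nextF_eq_add_one] using (hamVec_adj hn σ v).symm
  · obtain rfl : v = u + 1 := sub_eq_iff_eq_add'.mp (Fin.ext (h.trans hone.symm))
    simpa [nextF_eq_add_one] using hamVec_adj hn σ u

lemma isEulerian_hamVec (hn : 3 ≤ n) (σ : Equiv.Perm (Fin n)) : IsEulerian (hamVec σ) := by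
  refine ⟨fun e => ?_, hamVec_connected hn σ, fun u => ⟨1, one_pos, ?_⟩⟩
  · by_cases h : ∃ i, e.val = s(σ i, σ (nextF i))
    · exact ⟨1, by simp [hamVec, h]⟩
    · exact ⟨0, by simp [hamVec, h]⟩
  · rw [degree_hamVec hn]
    norm_num

lemma hamVec_mem_gtsp (hn : 3 ≤ n) (σ : Equiv.Perm (Fin n)) : hamVec σ ∈ gtsp n :=
  subset_convexHull ℝ _ (isEulerian_hamVec hn σ)

lemma stsp_subset_gtsp (hn : 3 ≤ n) : stsp n ⊆ gtsp n :=
  convexHull_min (by rintro _ ⟨σ, rfl⟩; exact hamVec_mem_gtsp hn σ) (convex_convexHull ℝ _)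

lemma card_edge : Fintype.card (Edge n) = n * (n - 1) / 2 := by
  rw [Sym2.card_subtype_not_diag, Fintype.card_fin, Nat.choose_two_right]

lemma vectorSpan_le_ker_of_dot_eq {G : Set (Edge n → ℝ)} {a : Edge n → ℝ} {α : ℝ}
    (h : ∀ x ∈ G, dot a x = α) :
    vectorSpan ℝ G ≤ LinearMap.ker (dotProductEquiv ℝ (Edge n) a) := by
  refine Submodule.span_le.mpr ?_
  rintro _ ⟨x, hx, y, hy, rfl⟩
  simp [← dot_eq_dotProduct, h x hx, h y hy]

/-- A codimension-one `G` inside the hyperplane `a·x = α` spans it affinely. -/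
lemma dot_eq_of_mem_hyperplane_of_adim_eq {G : Set (Edge n → ℝ)} (hGne : G.Nonempty)
    (hdim : adim G = Fintype.card (Edge n) - 1) {a : Edge n → ℝ} (ha : a ≠ 0) {α : ℝ}
    (hGa : ∀ x ∈ G, dot a x = α) {c : Edge n → ℝ} {γ : ℝ} (hGc : ∀ x ∈ G, dot c x = γ)
    {y : Edge n → ℝ} (hy : dot a y = α) : dot c y = γ := by
  have hker := (dotProductEquiv ℝ (Edge n)).map_ne_zero_iff.mpr ha
  have hspan : vectorSpan ℝ G = LinearMap.ker (dotProductEquiv ℝ (Edge n) a) := by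
    refine Submodule.eq_of_le_of_finrank_le (vectorSpan_le_ker_of_dot_eq hGa) ?_
    have := Module.Dual.finrank_ker_add_one_of_ne_zero hker
    rw [Module.finrank_fintype_fun_eq_card] at this
    rw [adim, direction_affineSpan] at hdim
    omega
  obtain ⟨p, hp⟩ := hGne
  have hyp : y - p ∈ vectorSpan ℝ G := by
    rw [hspan]
    simp [← dot_eq_dotProduct, hy, hGa p hp]
  simpa [← dot_eq_dotProduct, dot_sub, hGc p hp, sub_eq_zero] using
    vectorSpan_le_ker_of_dot_eq hGc hyp

lemma exists_one_lt_dot_of_facet_ne {a c : Edge n → ℝ} {γ : ℝ}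
    (hne : {x ∈ gtsp n | dot c x = γ}.Nonempty)
    (hdim : adim {x ∈ gtsp n | dot c x = γ} = Fintype.card (Edge n) - 1)
    (ha : ∀ x ∈ gtsp n, 1 ≤ dot a x)
    (hF : {x ∈ gtsp n | dot c x = γ} ≠ {x ∈ gtsp n | dot a x = 1}) :
    ∃ x ∈ {x ∈ gtsp n | dot c x = γ}, 1 < dot a x := by
  by_contra! h
  have hFa : ∀ x ∈ {x ∈ gtsp n | dot c x = γ}, dot a x = 1 :=
    fun x hx => (h x hx).antisymm (ha x hx.1)
  have ha0 : a ≠ 0 := by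
    rintro rfl
    obtain ⟨x, hx⟩ := hne
    simpa [dot] using hFa x hx
  exact hF (Set.ext fun x => ⟨fun hx => ⟨hx.1, hFa x hx⟩,
    fun hx => ⟨hx.1, dot_eq_of_mem_hyperplane_of_adim_eq hne hdim ha0 hFa (fun _ hx => hx.2) hx.2⟩⟩)

lemma IsGood.nonempty {F : Set (Edge n → ℝ)} (hF : IsGood F) (hn : 2 ≤ n) : F.Nonempty :=
  let ⟨x, hx, _⟩ := hF (mkEdge (show (⟨0, by omega⟩ : Fin n) ≠ ⟨1, by omega⟩ by simp))
  ⟨x, hx⟩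

lemma ne_zero_of_isNonNRFacet (hn : 3 ≤ n) {c : Edge n → ℝ} {γ : ℝ}
    (hG : IsNonNRFacet n {x ∈ gtsp n | dot c x = γ}) : c ≠ 0 := by
  rintro rfl
  obtain ⟨-, hGgood, -, hGS⟩ := hG
  obtain ⟨x, -, hx⟩ := hGgood.nonempty (by omega)
  have hGP : {x ∈ gtsp n | dot 0 x = γ} = gtsp n :=
    Set.ext fun y => ⟨And.left, fun hy => ⟨hy, by simpa [dot] using hx⟩⟩
  rw [hGP, Set.inter_eq_right.mpr (stsp_subset_gtsp hn)] at hGS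
  omega

section Polyhedron

variable {ι : Type*} [Fintype ι] {A : ι → Edge n → ℝ} {α : ι → ℝ}

lemma exists_forall_lt_dot {G : Set (Edge n → ℝ)} (hG : Convex ℝ G) (hGne : G.Nonempty)
    (hle : ∀ i, ∀ x ∈ G, α i ≤ dot (A i) x) (hlt : ∀ i, ∃ x ∈ G, α i < dot (A i) x) :
    ∃ x ∈ G, ∀ i, α i < dot (A i) x := by
  classical
  suffices ∀ s : Finset ι, ∃ x ∈ G, ∀ i ∈ s, α i < dot (A i) x by
    simpa using this Finset.univ
  intro s
  induction s using Finset.induction_on with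
  | empty => exact hGne.imp fun x hx => ⟨hx, by simp⟩
  | insert a s _ ih =>
    obtain ⟨x, hx, hxs⟩ := ih
    obtain ⟨y, hy, hya⟩ := hlt a
    refine ⟨(1 / 2 : ℝ) • x + (1 / 2 : ℝ) • y, hG hx hy (by norm_num) (by norm_num) (by norm_num),
      fun i hi => ?_⟩
    rw [dot_add, dot_smul, dot_smul]
    rcases Finset.mem_insert.mp hi with rfl | hi
    · linarith [hle i x hx]
    · linarith [hxs i hi, hle i y hy]

lemma exists_le_dot_and_dot_lt {x : Edge n → ℝ} (hx : ∀ i, α i < dot (A i) x)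
    {c : Edge n → ℝ} (hc : c ≠ 0) : ∃ y, (∀ i, α i ≤ dot (A i) y) ∧ dot c y < dot c x := by
  have hnear : ∀ᶠ ε in nhds (0 : ℝ), ∀ i, α i < dot (A i) (x - ε • c) := by
    refine Filter.eventually_all.mpr fun i => ?_
    simp only [dot_sub, dot_smul]
    refine Filter.Tendsto.eventually_const_lt (hx i) ?_
    have : Continuous fun ε : ℝ => dot (A i) x - ε * dot (A i) c := by fun_prop
    simpa using this.tendsto 0
  obtain ⟨ε, hε, hεpos⟩ :=
    ((hnear.filter_mono nhdsWithin_le_nhds).and (self_mem_nhdsWithin (s := Set.Ioi 0))).exists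
  have hcc : 0 < dot c c := lt_of_le_of_ne (Finset.sum_nonneg fun e _ => mul_self_nonneg (c e))
    (Ne.symm (dotProduct_self_eq_zero.not.mpr hc))
  refine ⟨x - ε • c, fun i => (hε i).le, ?_⟩
  rw [dot_sub, dot_smul]
  nlinarith

end Polyhedron

section Relaxation

variable {k : ℕ} (b : Fin k → Edge n → ℝ)

noncomputable def relaxNormal : Fin k ⊕ Fin n ⊕ Edge n → Edge n → ℝ :=
  Sum.elim b (Sum.elim delta fun e => Pi.single e 1)

def relaxRhs : Fin k ⊕ Fin n ⊕ Edge n → ℝ := Sum.elim 1 (Sum.elim 1 0)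

variable {b}

lemma mem_RBge_iff {x : Edge n → ℝ} :
    x ∈ RBge n b ↔ ∀ i, relaxRhs i ≤ dot (relaxNormal b i) x := by
  simp [RBge, relaxRhs, relaxNormal, Sum.forall, dot_eq_dotProduct]

lemma gtsp_subset_RBge (hb : ∀ j, ∀ x ∈ gtsp n, 1 ≤ dot (b j) x) : gtsp n ⊆ RBge n b :=
  fun _ hx => ⟨fun j => hb j _ hx, one_le_dot_delta_of_mem_gtsp hx, gtsp_nonneg hx⟩

lemma hamVec_mem_RBeq (hn : 3 ≤ n) (hb : ∀ j, ∀ x ∈ gtsp n, 1 ≤ dot (b j) x)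
    (σ : Equiv.Perm (Fin n)) : hamVec σ ∈ RBeq n b :=
  ⟨fun j => hb j _ (hamVec_mem_gtsp hn σ), dot_delta_hamVec hn σ,
    gtsp_nonneg (hamVec_mem_gtsp hn σ)⟩

lemma le_dot_of_mem_RBeq {t : Fin k → ℝ} (ht : ∀ j, 0 ≤ t j) (μ : Fin n → ℝ)
    {x : Edge n → ℝ} (hx : x ∈ RBeq n b) :
    ∑ j, t j - ∑ v, μ v ≤ dot (fun e => ∑ j, t j * b j e - ∑ v, μ v * delta v e) x := by
  have hc : (fun e => ∑ j, t j * b j e - ∑ v, μ v * delta v e)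
      = ∑ j, t j • b j - ∑ v, μ v • delta v := by
    funext e
    simp [Finset.sum_apply]
  rw [hc, dot_eq_dotProduct, sub_dotProduct, sum_dotProduct, sum_dotProduct]
  simp only [smul_dotProduct, smul_eq_mul, ← dot_eq_dotProduct, hx.2.1, mul_one]
  gcongr with j
  exact le_mul_of_one_le_right (ht j) (hx.1 j)

lemma le_csInf_dot_image_RBeq (hn : 3 ≤ n) (hb : ∀ j, ∀ x ∈ gtsp n, 1 ≤ dot (b j) x)
    {t : Fin k → ℝ} (ht : ∀ j, 0 ≤ t j) (μ : Fin n → ℝ) :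
    ∑ j, t j - ∑ v, μ v ≤
      sInf (dot (fun e => ∑ j, t j * b j e - ∑ v, μ v * delta v e) '' RBeq n b) :=
  le_csInf ⟨_, Set.mem_image_of_mem _ (hamVec_mem_RBeq hn hb 1)⟩ fun _ ⟨_, hx, hxc⟩ =>
    hxc ▸ le_dot_of_mem_RBeq ht μ hx

lemma bddBelow_dot_image_RBge {c : Edge n → ℝ} (hc : ∀ e, 0 ≤ c e) :
    BddBelow (dot c '' RBge n b) :=
  ⟨0, by
    rintro _ ⟨x, hx, rfl⟩
    exact Finset.sum_nonneg fun e _ => mul_nonneg (hc e) (hx.2.2 e)⟩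

lemma exists_mem_forall_relaxRhs_lt (hn : 2 ≤ n) (hb : ∀ j, ∀ x ∈ gtsp n, 1 ≤ dot (b j) x)
    (hbNR : ∀ j, IsNRFacet n {x ∈ gtsp n | dot (b j) x = 1}) {c : Edge n → ℝ} {γ : ℝ}
    (hG : IsNonNRFacet n {x ∈ gtsp n | dot c x = γ}) :
    ∃ x ∈ {x ∈ gtsp n | dot c x = γ}, ∀ i, relaxRhs i < dot (relaxNormal b i) x := by
  obtain ⟨⟨-, hGdim⟩, hGgood, hGdeg, hGS⟩ := hG
  have hGne := hGgood.nonempty hn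
  have hdim : adim {x ∈ gtsp n | dot c x = γ} = Fintype.card (Edge n) - 1 := card_edge ▸ hGdim
  refine exists_forall_lt_dot
    ((convex_convexHull ℝ _).inter (convex_hyperplane (dotProductBilin ℝ ℝ c).isLinear γ)) hGne
    (fun i x hx => mem_RBge_iff.mp (gtsp_subset_RBge hb hx.1) i) ?_
  rintro (j | v | e)
  · refine exists_one_lt_dot_of_facet_ne (a := b j) hGne hdim (hb j) fun h => ?_
    have := (hbNR j).2.2
    rw [← h] at this
    exact hGS.ne this
  · exact exists_one_lt_dot_of_facet_ne hGne hdim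
      (fun x hx => one_le_dot_delta_of_mem_gtsp hx v) fun h => hGdeg ⟨v, h⟩
  · obtain ⟨x, hx, hxe⟩ := hGgood e
    exact ⟨x, hx, by simpa [relaxRhs, relaxNormal, dot_eq_dotProduct] using hxe⟩

end Relaxation

/-- under the parsimonious property of an NR relaxation, a
non-NR-facet-defining inequality cannot be written as a nonnegative combination
of the relaxation's inequalities plus a combination of degree equations. -/
theorem stmt18 (n k : ℕ) (hn : 5 ≤ n) (b : Fin k → Edge n → ℝ)
    (hbvalid : ∀ j, ∀ x ∈ gtsp n, 1 ≤ dot (b j) x)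
    (hbNR : ∀ j, IsNRFacet n {x ∈ gtsp n | dot (b j) x = 1})
    (hpars : Parsimonious n b)
    (c : Edge n → ℝ) (γ : ℝ)
    (hcvalid : ∀ x ∈ gtsp n, γ ≤ dot c x)
    (hcface : IsNonNRFacet n {x ∈ gtsp n | dot c x = γ}) :
    ¬ ∃ (t : Fin k → ℝ) (μ : Fin n → ℝ), (∀ j, 0 ≤ t j) ∧
        c = (fun e => ∑ j, t j * b j e - ∑ v, μ v * delta v e) ∧
        γ = ∑ j, t j - ∑ v, μ v := by
  rintro ⟨t, μ, ht, hc, hγ⟩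
  have hn3 : 3 ≤ n := by omega
  have hmetric : IsMetric c := isMetric_of_isGood hcvalid hcface.2.1
  obtain ⟨xs, ⟨-, hxsc⟩, hxs⟩ := exists_mem_forall_relaxRhs_lt (by omega) hbvalid hbNR hcface
  obtain ⟨x', hx', hx'c⟩ :=
    exists_le_dot_and_dot_lt hxs (ne_zero_of_isNonNRFacet hn3 hcface)
  have hlow : γ ≤ sInf (dot c '' RBeq n b) := hc ▸ hγ ▸ le_csInf_dot_image_RBeq hn3 hbvalid ht μ
  have hup : sInf (dot c '' RBge n b) ≤ dot c x' :=
    csInf_le (bddBelow_dot_image_RBge (hmetric.nonneg hn3)) ⟨x', mem_RBge_iff.mpr hx', rfl⟩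
  linarith [hpars c hmetric]

end TSP
end
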